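/- Every connected part arising in a game of clobber started from an even-length alternating path is, up to color negation, of the form: an optional single leading o, followed by an alternating string beginning with o, optionally followed by one extra stone of the same color as the last stone of the alternating string. Moreover this family of strings is closed under clobber moves: any move on such a part splits it into at most two parts of the same form. -/

import Mathlib

universe u

namespace SetTheory

/-- Pre-game, as in the older Mathlib (`SetTheory.PGame`), removed from current Mathlib. -/
inductive PGame : Type (u + 1)
  | mk : ∀ α β : Type u, (α → PGame) → (β → PGame) → PGame

namespace PGame

/-- The pre-game with no moves, as in the older Mathlib. -/
instance : Zero PGame :=
  ⟨⟨PEmpty, PEmpty, PEmpty.elim, PEmpty.elim⟩⟩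

/-- The pre-game with given lists of left and right options, as in the older Mathlib. -/
def ofLists (L R : List PGame.{u}) : PGame.{u} :=
  mk (ULift (Fin L.length)) (ULift (Fin R.length)) (fun i => L[i.down.1]) fun j => R[j.down.1]

end PGame

end SetTheory

open SetTheory PGame

inductive Cell | x | o | e
deriving DecidableEq

abbrev Pos := List Cell

/-- All positions reachable by one move of the player with stones `me`
clobbering an adjacent stone of the opponent `opp`. -/
def movesAux (me opp : Cell) : Pos → List Pos
  | a :: b :: rest =>
      (if a = me ∧ b = opp then [Cell.e :: me :: rest] else []) ++
      (if a = opp ∧ b = me then [me :: Cell.e :: rest] else []) ++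
      (movesAux me opp (b :: rest)).map (a :: ·)
  | _ => []

def leftMoves (p : Pos) : List Pos := movesAux Cell.x Cell.o p
def rightMoves (p : Pos) : List Pos := movesAux Cell.o Cell.x p

def stones (p : Pos) : Nat := p.countP (· != Cell.e)

/-- Game value of a clobber position, via fuel recursion (each move removes one stone). -/
def valueFuel : Nat → Pos → PGame
  | 0, _ => 0
  | n+1, p => PGame.ofLists ((leftMoves p).map (valueFuel n)) ((rightMoves p).map (valueFuel n))

def value (p : Pos) : PGame := valueFuel (stones p) p

/-- Swap the color of a cell. -/
def swapCell : Cell → Cell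
  | Cell.x => Cell.o
  | Cell.o => Cell.x
  | Cell.e => Cell.e

/-- The maximal contiguous nonempty segments (parts) of a position. -/
def parts (p : Pos) : List Pos := (p.splitOn Cell.e).filter (· ≠ [])

/-- The alternating string of length `n` starting with `o`. -/
def altStr (n : Nat) : Pos :=
  (List.range n).map (fun i => if i % 2 = 0 then Cell.o else Cell.x)

/-- The last character of the alternating string of length `n`. -/
def lastChar (n : Nat) : Cell := if (n - 1) % 2 = 0 then Cell.o else Cell.x

/-- A string of the form `[o]a[c]`: an optional leading `o`, a nonempty alternating
string `a` starting with `o`, and optionally an extra stone `c` matching the final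
stone of `a`. -/
def InU0 (w : Pos) : Prop :=
  ∃ n ≥ 1, ∃ lead tail : Bool,
    w = (if lead then [Cell.o] else []) ++ altStr n ++ (if tail then [lastChar n] else [])

/-- The family `U`: strings that, up to color negation, have the form `[o]a[c]`. -/
def InU (w : Pos) : Prop := InU0 w ∨ InU0 (w.map swapCell)

/-- One legal clobber move (by either player). -/
def Step (p q : Pos) : Prop := q ∈ leftMoves p ∨ q ∈ rightMoves p

/-- Positions reachable by a sequence of legal moves. -/
def Reachable (p q : Pos) : Prop := Relation.ReflTransGen Step p q

/-- The alternating position `(ox)^n`. -/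
def altOX : Nat → Pos
  | 0 => []
  | n+1 => Cell.o :: Cell.x :: altOX n

/-!
Up to colour negation, `U` consists of the nonempty strings of stones whose inside (everything
but the first and the last stone) alternates: the optional leading `o` and the optional final `c`
are exactly where two equal neighbours may occur. A move at adjacent stones `c d` of such a string
leaves the pieces `A`, `c :: B` or `A ++ [d]`, `B`, and the inside of each piece lies inside the
original one, because the moved stone only ever becomes an end stone. Parts away from the move are
untouched, and `(ox)^n` alternates, so induction along the game gives the first claim.
-/

namespace List

variable {α : Type*} {u w : List α}

theorem IsInfix.tail (h : u <:+: w) : u.tail <:+: w.tail := by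
  obtain ⟨s, t, rfl⟩ := h
  rcases s with _ | ⟨a, s⟩
  · rcases u with _ | ⟨b, u⟩
    · exact nil_infix
    · exact (prefix_append u t).isInfix
  · exact (tail_suffix u).isInfix.trans (infix_append s u t)

theorem IsInfix.dropLast (h : u <:+: w) : u.dropLast <:+: w.dropLast := by
  obtain ⟨s, t, rfl⟩ := h
  rcases eq_nil_or_concat' t with rfl | ⟨t, b, rfl⟩
  · rcases eq_nil_or_concat' u with rfl | ⟨u, b, rfl⟩
    · exact nil_infix
    · simpa using (suffix_append s u).isInfix
  · simpa [← append_assoc] using (dropLast_prefix u).isInfix.trans (infix_append s u t)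

theorem tail_dropLast_concat (l : List α) (a : α) : (l ++ [a]).tail.dropLast = l.tail := by
  rw [← tail_dropLast, dropLast_concat]

theorem tail_dropLast_infix_of_length_le_one {L M T : List α}
    (hL : L.length ≤ 1) (hT : T.length ≤ 1) : (L ++ M ++ T).tail.dropLast <:+: M := by
  rcases L with _ | ⟨a, _ | _⟩ <;> rcases T with _ | ⟨b, _ | _⟩ <;>
    simp only [length_cons, length_nil] at hL hT <;> try omega
  · simpa using (dropLast_prefix _).isInfix.trans (tail_suffix M).isInfix
  · simpa [tail_dropLast_concat] using (tail_suffix M).isInfix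
  · simpa using (dropLast_prefix M).isInfix
  · simp

end List

theorem swapCell_swapCell (c : Cell) : swapCell (swapCell c) = c := by
  cases c <;> rfl

theorem swapCell_injective : Function.Injective swapCell :=
  Function.LeftInverse.injective swapCell_swapCell

theorem swapCell_eq_e_iff {c : Cell} : swapCell c = Cell.e ↔ c = Cell.e := by
  cases c <;> simp [swapCell]

theorem e_mem_map_swapCell_iff {w : Pos} : Cell.e ∈ w.map swapCell ↔ Cell.e ∈ w := by
  simp [swapCell_eq_e_iff]

theorem lastChar_ne_e (n : Nat) : lastChar n ≠ Cell.e := by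
  unfold lastChar; split <;> simp

theorem lastChar_succ_ne {n : Nat} (hn : n ≠ 0) : lastChar n ≠ lastChar (n + 1) := by
  rcases Nat.mod_two_eq_zero_or_one (n - 1) with h | h <;>
    simp [lastChar, h, show n % 2 = 1 - (n - 1) % 2 by omega]

theorem altStr_succ (n : Nat) : altStr (n + 1) = altStr n ++ [lastChar (n + 1)] := by
  simp [altStr, lastChar, List.range_succ]

theorem e_not_mem_altStr (n : Nat) : Cell.e ∉ altStr n := by
  simp only [altStr, List.mem_map, not_exists, not_and]
  intro i _
  split <;> simp

theorem altStr_eq_nil_iff {n : Nat} : altStr n = [] ↔ n = 0 := by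
  simp [altStr]

theorem head?_altStr {n : Nat} (hn : n ≠ 0) : (altStr n).head? = some Cell.o := by
  obtain ⟨n, rfl⟩ := Nat.exists_eq_succ_of_ne_zero hn
  simp [altStr, List.range_succ_eq_map]

theorem getLast?_altStr {n : Nat} (hn : n ≠ 0) : (altStr n).getLast? = some (lastChar n) := by
  obtain ⟨n, rfl⟩ := Nat.exists_eq_succ_of_ne_zero hn
  simp [altStr_succ]

theorem isChain_altStr (n : Nat) : (altStr n).IsChain (· ≠ ·) := by
  induction n with
  | zero => exact List.isChain_nil
  | succ n ih =>
    rw [altStr_succ, List.isChain_append]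
    refine ⟨ih, List.isChain_singleton _, fun a ha b hb => ?_⟩
    rcases eq_or_ne n 0 with rfl | hn
    · simp [altStr] at ha
    rw [getLast?_altStr hn, Option.mem_some_iff] at ha
    rw [List.head?_cons, Option.mem_some_iff] at hb
    exact ha ▸ hb ▸ lastChar_succ_ne hn

theorem length_altStr (n : Nat) : (altStr n).length = n := by
  simp [altStr]

theorem altOX_eq_altStr (n : Nat) : altOX n = altStr (2 * n) := by
  induction n with
  | zero => rfl
  | succ n ih =>
    rw [show 2 * (n + 1) = 2 * n + 1 + 1 by omega, altOX, ih]
    simp [altStr, List.range_succ_eq_map, Function.comp_def, Nat.succ_mod_two_eq_zero_iff,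
      Nat.succ_mod_two_eq_one_iff]

/-- Over the two stone colours, `≠` leaves only one choice for each next stone. -/
theorem eq_of_isChain_ne {u w : Pos} (hu : Cell.e ∉ u) (hw : Cell.e ∉ w)
    (hcu : u.IsChain (· ≠ ·)) (hcw : w.IsChain (· ≠ ·))
    (hlen : u.length = w.length) (hhead : u.head? = w.head?) : u = w := by
  induction u generalizing w with
  | nil => exact (List.length_eq_zero_iff.1 hlen.symm).symm
  | cons a u ih =>
    rcases w with _ | ⟨b, w⟩
    · simp at hlen
    obtain rfl : a = b := by simpa using hhead
    congr 1
    rcases u with _ | ⟨c, u⟩ <;> rcases w with _ | ⟨d, w⟩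
    · rfl
    · simp at hlen
    · simp at hlen
    obtain ⟨hac, hcu'⟩ := List.isChain_cons_cons.1 hcu
    obtain ⟨had, hcw'⟩ := List.isChain_cons_cons.1 hcw
    obtain rfl : c = d := by
      cases a <;> cases c <;> cases d <;> simp_all
    exact ih (List.not_mem_of_not_mem_cons hu) (List.not_mem_of_not_mem_cons hw) hcu' hcw'
      (by simpa using hlen) rfl

def NearlyAlternating (w : Pos) : Prop :=
  w ≠ [] ∧ Cell.e ∉ w ∧ w.tail.dropLast.IsChain (· ≠ ·)

theorem nearlyAlternating_map_swapCell_iff {w : Pos} :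
    NearlyAlternating (w.map swapCell) ↔ NearlyAlternating w := by
  simp only [NearlyAlternating, ne_eq, List.map_eq_nil_iff, e_mem_map_swapCell_iff,
    ← List.map_tail, ← List.map_dropLast, List.isChain_map, swapCell_injective.ne_iff]

theorem nearlyAlternating_of_inU0 {w : Pos} (h : InU0 w) : NearlyAlternating w := by
  obtain ⟨n, hn, lead, tail, rfl⟩ := h
  refine ⟨?_, ?_, ?_⟩
  · simp [altStr_eq_nil_iff, Nat.one_le_iff_ne_zero.1 hn]
  · cases lead <;> cases tail <;> simp [e_not_mem_altStr, (lastChar_ne_e n).symm]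
  · exact (isChain_altStr n).infix <| List.tail_dropLast_infix_of_length_le_one
      (by cases lead <;> simp) (by cases tail <;> simp)

theorem exists_eq_altStr_append_of_isChain_dropLast {u : Pos} (hne : u ≠ []) (he : Cell.e ∉ u)
    (ho : u.head? = some Cell.o) (hc : u.dropLast.IsChain (· ≠ ·)) :
    ∃ n ≥ 1, ∃ tail : Bool, u = altStr n ++ if tail then [lastChar n] else [] := by
  obtain ⟨v, b, rfl⟩ := (List.eq_nil_or_concat' u).resolve_left hne
  rw [List.dropLast_concat] at hc
  rcases eq_or_ne v [] with rfl | hv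
  · obtain rfl : b = Cell.o := by simpa using ho
    exact ⟨1, le_rfl, false, rfl⟩
  have hve : Cell.e ∉ v := fun h => he (List.mem_append_left _ h)
  have hn : v.length ≠ 0 := by simpa using hv
  have hvo : v.head? = some Cell.o := by rwa [List.head?_append_of_ne_nil _ hv] at ho
  have hv' : v = altStr v.length := eq_of_isChain_ne hve (e_not_mem_altStr _) hc
    (isChain_altStr _) (length_altStr _).symm (by rw [hvo, head?_altStr hn])
  by_cases hb : b = lastChar v.length
  · exact ⟨v.length, Nat.one_le_iff_ne_zero.2 hn, true, by rw [if_pos rfl, ← hb, ← hv']⟩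
  refine ⟨v.length + 1, by omega, false, ?_⟩
  rw [if_neg Bool.false_ne_true, List.append_nil]
  refine eq_of_isChain_ne he (e_not_mem_altStr _) ?_ (isChain_altStr _) (by simp [length_altStr])
    (by rw [ho, head?_altStr (by omega)])
  refine List.isChain_append.2 ⟨hc, List.isChain_singleton b, fun c hlast d hhead => ?_⟩
  rw [hv', getLast?_altStr hn, Option.mem_some_iff] at hlast
  rw [List.head?_cons, Option.mem_some_iff] at hhead
  exact hlast ▸ hhead ▸ Ne.symm hb

theorem inU0_of_nearlyAlternating {w : Pos} (h : NearlyAlternating w)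
    (ho : w.head? = some Cell.o) : InU0 w := by
  obtain ⟨hne, he, hc⟩ := h
  rcases w with _ | ⟨a, r⟩
  · exact absurd rfl hne
  obtain rfl : a = Cell.o := by simpa using ho
  by_cases hr : r.head? = some Cell.o
  · obtain ⟨n, hn, tail, hr'⟩ := exists_eq_altStr_append_of_isChain_dropLast
      (by rintro rfl; simp at hr) (List.not_mem_of_not_mem_cons he) hr hc
    exact ⟨n, hn, true, tail, by rw [hr']; simp⟩
  have hc' : (Cell.o :: r).dropLast.IsChain (· ≠ ·) := by
    rcases eq_or_ne r [] with rfl | hr0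
    · simp
    rw [List.dropLast_cons_of_ne_nil hr0, List.isChain_cons, List.head?_dropLast]
    refine ⟨fun y hy => ?_, hc⟩
    split_ifs at hy
    · exact fun hoy => hr (hoy ▸ hy)
    · simp at hy
  obtain ⟨n, hn, tail, h'⟩ := exists_eq_altStr_append_of_isChain_dropLast hne he ho hc'
  exact ⟨n, hn, false, tail, by rw [h']; simp⟩

theorem inU_iff_nearlyAlternating {w : Pos} : InU w ↔ NearlyAlternating w := by
  refine ⟨fun h => h.elim nearlyAlternating_of_inU0 fun h => ?_, fun h => ?_⟩
  · exact nearlyAlternating_map_swapCell_iff.1 (nearlyAlternating_of_inU0 h)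
  obtain ⟨a, r, rfl⟩ := List.exists_cons_of_ne_nil h.1
  cases a
  · exact Or.inr (inU0_of_nearlyAlternating (nearlyAlternating_map_swapCell_iff.2 h) rfl)
  · exact Or.inl (inU0_of_nearlyAlternating h rfl)
  · exact absurd List.mem_cons_self h.2.1

theorem NearlyAlternating.of_tail_dropLast_infix {u w : Pos} (h : NearlyAlternating w)
    (hne : u ≠ []) (hsub : u ⊆ w) (hin : u.tail.dropLast <:+: w.tail.dropLast) :
    NearlyAlternating u :=
  ⟨hne, fun he => h.2.1 (hsub he), h.2.2.infix hin⟩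

theorem NearlyAlternating.infix {u w : Pos} (h : NearlyAlternating w) (hne : u ≠ [])
    (hu : u <:+: w) : NearlyAlternating u :=
  h.of_tail_dropLast_infix hne hu.subset hu.tail.dropLast

theorem parts_append_cons_e (A B : Pos) : parts (A ++ Cell.e :: B) = parts A ++ parts B := by
  simp [parts, List.splitOn, List.splitOnP_append_cons, List.filter_append]

theorem parts_eq_singleton {u : Pos} (he : Cell.e ∉ u) (hne : u ≠ []) : parts u = [u] := by
  simp [parts, List.splitOn_eq_singleton he, hne]

theorem forall_mem_parts_of_e_not_mem {P : Pos → Prop} {u : Pos} (he : Cell.e ∉ u)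
    (hP : u ≠ [] → P u) : ∀ q ∈ parts u, P q := by
  rcases eq_or_ne u [] with rfl | hne
  · simp [parts]
  · simpa [parts_eq_singleton he hne] using hP hne

theorem NearlyAlternating.clobber {A B : Pos} {c d : Cell}
    (h : NearlyAlternating (A ++ [c, d] ++ B)) :
    (∀ q ∈ parts (A ++ [Cell.e, c] ++ B), NearlyAlternating q) ∧
      ∀ q ∈ parts (A ++ [d, Cell.e] ++ B), NearlyAlternating q := by
  have he := h.2.1
  simp only [List.append_assoc, List.cons_append, List.nil_append, List.mem_append,
    List.mem_cons, not_or] at he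
  have hA : ∀ q ∈ parts A, NearlyAlternating q :=
    forall_mem_parts_of_e_not_mem he.1 fun hA => h.infix hA ⟨[], [c, d] ++ B, by simp⟩
  have hB : ∀ q ∈ parts B, NearlyAlternating q :=
    forall_mem_parts_of_e_not_mem he.2.2.2 fun hB => h.infix hB (List.suffix_append _ B).isInfix
  constructor
  · intro q hq
    rw [List.append_assoc, List.cons_append, List.singleton_append, parts_append_cons_e,
      List.mem_append] at hq
    refine hq.elim (hA q) (forall_mem_parts_of_e_not_mem ?_ (fun _ => ?_) q)
    · simpa using ⟨he.2.1, he.2.2.2⟩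
    refine h.of_tail_dropLast_infix (List.cons_ne_nil _ _)
      (List.cons_subset.2 ⟨by simp, fun a ha => by simp [ha]⟩)
      (show (d :: B) <:+: A ++ [c, d] ++ B from ⟨A ++ [c], [], by simp⟩).tail.dropLast
  · intro q hq
    rw [List.append_cons _ d, List.append_assoc, List.cons_append, List.nil_append,
      parts_append_cons_e, List.mem_append] at hq
    refine hq.elim (forall_mem_parts_of_e_not_mem ?_ (fun _ => ?_) q) (hB q)
    · simpa using ⟨he.1, he.2.2.1⟩
    refine h.of_tail_dropLast_infix (by simp)
      (List.append_subset.2 ⟨fun a ha => by simp [ha], by simp⟩) ?_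
    rw [List.tail_dropLast_concat, ← List.tail_dropLast_concat A c]
    exact (show A ++ [c] <:+: A ++ [c, d] ++ B from ⟨[], d :: B, by simp⟩).tail.dropLast

theorem exists_parts_append_left_eq (A : Pos) :
    ∃ A₁ A₂, Cell.e ∉ A₂ ∧ ∀ Z, parts (A ++ Z) = parts A₁ ++ parts (A₂ ++ Z) := by
  induction A using List.reverseRecOn with
  | nil => exact ⟨[], [], List.not_mem_nil, fun Z => by simp [parts]⟩
  | append_singleton A a ih =>
    by_cases ha : a = Cell.e
    · refine ⟨A ++ [a], [], List.not_mem_nil, fun Z => ?_⟩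
      simp [ha, parts_append_cons_e, show parts [] = [] by simp [parts]]
    · obtain ⟨A₁, A₂, hA₂, h⟩ := ih
      refine ⟨A₁, A₂ ++ [a], by simpa [Ne.symm ha] using hA₂, fun Z => ?_⟩
      simpa using h (a :: Z)

theorem exists_parts_append_right_eq (B : Pos) :
    ∃ B₁ B₂, Cell.e ∉ B₁ ∧ ∀ Z, parts (Z ++ B) = parts (Z ++ B₁) ++ parts B₂ := by
  induction B with
  | nil => exact ⟨[], [], List.not_mem_nil, fun Z => by simp [parts]⟩
  | cons b B ih =>
    by_cases hb : b = Cell.e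
    · exact ⟨[], B, List.not_mem_nil, fun Z => by simp [hb, parts_append_cons_e]⟩
    · obtain ⟨B₁, B₂, hB₁, h⟩ := ih
      refine ⟨b :: B₁, B₂, by simpa [Ne.symm hb] using hB₁, fun Z => ?_⟩
      simpa using h (Z ++ [b])

theorem exists_parts_append_append_eq (A B : Pos) :
    ∃ A₁ A₂ B₁ B₂, Cell.e ∉ A₂ ∧ Cell.e ∉ B₁ ∧
      ∀ X, parts (A ++ X ++ B) = parts A₁ ++ parts (A₂ ++ X ++ B₁) ++ parts B₂ := by
  obtain ⟨A₁, A₂, hA₂, hA⟩ := exists_parts_append_left_eq A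
  obtain ⟨B₁, B₂, hB₁, hB⟩ := exists_parts_append_right_eq B
  refine ⟨A₁, A₂, B₁, B₂, hA₂, hB₁, fun X => ?_⟩
  rw [List.append_assoc A, hA, ← List.append_assoc A₂, hB]
  exact (List.append_assoc _ _ _).symm

theorem exists_eq_of_mem_movesAux {me opp : Cell} {p q : Pos} (h : q ∈ movesAux me opp p) :
    ∃ A B, (p = A ++ [me, opp] ++ B ∧ q = A ++ [Cell.e, me] ++ B) ∨
      (p = A ++ [opp, me] ++ B ∧ q = A ++ [me, Cell.e] ++ B) := by
  induction p generalizing q with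
  | nil => simp [movesAux] at h
  | cons a p ih =>
    rcases p with _ | ⟨b, p⟩
    · simp [movesAux] at h
    simp only [movesAux, List.mem_append, List.mem_map, List.mem_ite_nil_right,
      List.mem_singleton] at h
    rcases h with (⟨⟨rfl, rfl⟩, rfl⟩ | ⟨⟨rfl, rfl⟩, rfl⟩) | ⟨q, hq, rfl⟩
    · exact ⟨[], p, Or.inl ⟨rfl, rfl⟩⟩
    · exact ⟨[], p, Or.inr ⟨rfl, rfl⟩⟩
    · obtain ⟨A, B, h⟩ := ih hq
      exact ⟨a :: A, B, by simpa using h⟩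

theorem Step.exists_eq {w w' : Pos} (h : Step w w') :
    ∃ A B c d, c ≠ Cell.e ∧ d ≠ Cell.e ∧ w = A ++ [c, d] ++ B ∧
      (w' = A ++ [Cell.e, c] ++ B ∨ w' = A ++ [d, Cell.e] ++ B) := by
  rcases h with h | h <;> obtain ⟨A, B, ⟨rfl, rfl⟩ | ⟨rfl, rfl⟩⟩ := exists_eq_of_mem_movesAux h
  exacts [⟨A, B, _, _, by decide, by decide, rfl, Or.inl rfl⟩,
    ⟨A, B, _, _, by decide, by decide, rfl, Or.inr rfl⟩,
    ⟨A, B, _, _, by decide, by decide, rfl, Or.inl rfl⟩,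
    ⟨A, B, _, _, by decide, by decide, rfl, Or.inr rfl⟩]

theorem Step.forall_mem_parts_nearlyAlternating {w w' : Pos} (hs : Step w w')
    (hw : ∀ q ∈ parts w, NearlyAlternating q) : ∀ q ∈ parts w', NearlyAlternating q := by
  obtain ⟨A, B, c, d, hc, hd, rfl, hw'⟩ := hs.exists_eq
  obtain ⟨A₁, A₂, B₁, B₂, hA₂, hB₁, hparts⟩ := exists_parts_append_append_eq A B
  simp only [hparts, List.mem_append] at hw
  have hmid : NearlyAlternating (A₂ ++ [c, d] ++ B₁) := by
    refine hw _ (Or.inl (Or.inr ?_))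
    rw [parts_eq_singleton (by simp [hA₂, hB₁, hc.symm, hd.symm]) (by simp)]
    exact List.mem_singleton_self _
  intro q hq
  rcases hw' with rfl | rfl <;> rw [hparts, List.mem_append, List.mem_append] at hq
  · exact hq.elim (·.elim (hw q ∘ .inl ∘ .inl) (hmid.clobber.1 q)) (hw q ∘ .inr)
  · exact hq.elim (·.elim (hw q ∘ .inl ∘ .inl) (hmid.clobber.2 q)) (hw q ∘ .inr)

theorem forall_mem_parts_altOX (n : Nat) : ∀ q ∈ parts (altOX n), InU q := by
  rw [altOX_eq_altStr]
  refine forall_mem_parts_of_e_not_mem (e_not_mem_altStr _) fun hne => Or.inl ?_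
  exact ⟨2 * n, by simpa [altStr_eq_nil_iff, Nat.one_le_iff_ne_zero] using hne, false, false,
    by simp⟩

/-- Every part arising in a clobber game started from an even-length alternating path
is in the family `U`, and `U` is closed under clobber moves: any move on a part in
`U` leaves only parts in `U`. -/
theorem parts_in_U_and_closed :
    (∀ n p, Reachable (altOX n) p → ∀ q ∈ parts p, InU q) ∧
    (∀ w, InU w → ∀ w' , Step w w' → ∀ q ∈ parts w', InU q) := by
  have closed : ∀ w w', Step w w' → (∀ q ∈ parts w, InU q) → ∀ q ∈ parts w', InU q := by
    simpa only [inU_iff_nearlyAlternating] using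
      fun _ _ hs => Step.forall_mem_parts_nearlyAlternating hs
  refine ⟨fun n p hp => ?_, fun w hw w' hs => closed w w' hs ?_⟩
  · induction hp with
    | refl => exact forall_mem_parts_altOX n
    | tail _ hs ih => exact closed _ _ hs ih
  · obtain ⟨hne, he, -⟩ := inU_iff_nearlyAlternating.1 hw
    simpa [parts_eq_singleton he hne] using hw
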